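/- arXiv:0901.2591 — 2 statements merged into one kernel-verified Lean document; each statement's English description precedes it below -/
import Mathlib

section
/- For every 0 ≤ k ≤ n−1 the function f_k is invariant under the coadjoint action of GL_n ⋉ (V ⊕ V*): f_k(gXg⁻¹, λg⁻¹, gv) = f_k(X,λ,v) for every invertible n×n matrix g, and f_k(X + wλ − vν, λ, v) = f_k(X,λ,v) for every column vector w ∈ V and row vector ν ∈ V* (here wλ and vν denote the rank-one n×n matrices obtained as column-times-row products). -/
open Matrix

/-- `Q X j` is defined by `det (t•I - X) = ∑ j, (-1)^j * Q j X * t^(n-j)`,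
i.e. `Q X j = (-1)^j * (coefficient of t^(n-j) in the characteristic polynomial of X)`. -/
noncomputable def QQ {R : Type*} [CommRing R] {n : ℕ} (X : Matrix (Fin n) (Fin n) R)
    (j : ℕ) : R :=
  (-1) ^ j * X.charpoly.coeff (n - j)

/-- `B X k = X^k - Q₁(X)•X^(k-1) + Q₂(X)•X^(k-2) - ⋯ + (-1)^k Q_k(X)•I`. -/
noncomputable def BB {R : Type*} [CommRing R] {n : ℕ} (X : Matrix (Fin n) (Fin n) R)
    (k : ℕ) : Matrix (Fin n) (Fin n) R :=
  ∑ i ∈ Finset.range (k + 1), ((-1) ^ i * QQ X i) • X ^ (k - i)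

noncomputable def fdef {R : Type*} [CommRing R] {n : ℕ} (X : Matrix (Fin n) (Fin n) R)
    (l v : Fin n → R) (k : ℕ) : R :=
  l ⬝ᵥ (BB X k).mulVec v

/-! `B_k(X)` is the coefficient of `t ^ (n - 1 - k)` in `adj (t - X)`, as one sees by comparing
coefficients in `(t - X) * adj (t - X) = χ_X(t)`; so `f_k` is a coefficient of
`λ * adj (t - X) * v`. Invariance under conjugation follows from `B_k(g X g⁻¹) = g B_k(X) g⁻¹`.
For the translations, `t - (X + w λ - v ν) = (t - X) + v ν - w λ`, and Cramer's rule gives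
`adj (A + u w) * u = adj A * u` and dually `w * adj (A + u w) = w * adj A`. -/

open Polynomial

namespace Matrix

section RankOne

variable {R : Type*} [CommRing R] {n : Type*} [Fintype n] [DecidableEq n]

/-- Subtracting `w j` times the column `i` (which is `u`) from every other column `j` removes
the perturbation. -/
theorem det_updateCol_add_vecMulVec_self (A : Matrix n n R) (u w : n → R) (i : n) :
    ((A + vecMulVec u w).updateCol i u).det = (A.updateCol i u).det := by
  rw [← det_transpose, ← det_transpose (A.updateCol i u)]
  refine det_eq_of_forall_row_eq_smul_add_const (Function.update w i 0) i
    (Function.update_self i 0 w) fun r s => ?_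
  by_cases h : r = i <;> simp [h, vecMulVec_apply, mul_comm]

theorem adjugate_add_vecMulVec_mulVec (A : Matrix n n R) (u w : n → R) :
    adjugate (A + vecMulVec u w) *ᵥ u = adjugate A *ᵥ u := by
  ext i
  rw [← cramer_eq_adjugate_mulVec, ← cramer_eq_adjugate_mulVec, cramer_apply, cramer_apply,
    det_updateCol_add_vecMulVec_self]

theorem vecMul_adjugate_add_vecMulVec (A : Matrix n n R) (u w : n → R) :
    w ᵥ* adjugate (A + vecMulVec u w) = w ᵥ* adjugate A := by
  simpa [← vecMul_transpose, adjugate_transpose, transpose_vecMulVec] using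
    adjugate_add_vecMulVec_mulVec Aᵀ w u

theorem dotProduct_adjugate_add_vecMulVec_mulVec (A : Matrix n n R) (l v u w : n → R) :
    l ⬝ᵥ adjugate (A + vecMulVec v w + vecMulVec u l) *ᵥ v = l ⬝ᵥ adjugate A *ᵥ v := by
  rw [dotProduct_mulVec, vecMul_adjugate_add_vecMulVec, ← dotProduct_mulVec,
    adjugate_add_vecMulVec_mulVec]

end RankOne

section CharmatrixAdjugate

variable {R : Type*} [CommRing R] {n : Type*} [Fintype n] [DecidableEq n]

noncomputable def charmatrixAdjugate (M : Matrix n n R) : (Matrix n n R)[X] :=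
  matPolyEquiv (adjugate (charmatrix M))

theorem charmatrixAdjugate_coeff (M : Matrix n n R) (m : ℕ) :
    (charmatrixAdjugate M).coeff m
      = M * (charmatrixAdjugate M).coeff (m + 1) + M.charpoly.coeff (m + 1) • 1 := by
  have h := congrArg (fun p => (matPolyEquiv p).coeff (m + 1)) (mul_adjugate (charmatrix M))
  simp only [_root_.map_mul, matPolyEquiv_charmatrix, matPolyEquiv_smul_one, sub_mul, coeff_sub,
    coeff_X_mul, coeff_C_mul, coeff_map, Algebra.algebraMap_eq_smul_one] at h
  rw [← charmatrixAdjugate, ← charpoly] at h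
  exact eq_add_of_sub_eq' h

theorem charmatrixAdjugate_coeff_eq_zero [Nontrivial R] (M : Matrix n n R) {m : ℕ}
    (hm : Fintype.card n ≤ m) : (charmatrixAdjugate M).coeff m = 0 := by
  have shift : ∀ j,
      (charmatrixAdjugate M).coeff m = M ^ j * (charmatrixAdjugate M).coeff (m + j) := by
    intro j
    induction j with
    | zero => simp
    | succ j ih =>
      rw [ih, charmatrixAdjugate_coeff, coeff_eq_zero_of_natDegree_lt (p := M.charpoly)
        (by rw [charpoly_natDegree_eq_dim]; omega), zero_smul, add_zero, ← mul_assoc,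
        ← pow_succ, add_assoc]
  rw [shift ((charmatrixAdjugate M).natDegree + 1),
    coeff_eq_zero_of_natDegree_lt (by omega), mul_zero]

theorem charmatrix_add_vecMulVec_sub_vecMulVec (X : Matrix n n R) (w l v ν : n → R) :
    charmatrix (X + vecMulVec w l - vecMulVec v ν)
      = charmatrix X + vecMulVec (C ∘ v) (C ∘ ν) + vecMulVec (-(C ∘ w)) (C ∘ l) := by
  ext i j : 1
  simp only [charmatrix_apply, sub_apply, add_apply, vecMulVec_apply, map_sub, map_add, map_mul,
    neg_vecMulVec, Function.comp_apply, neg_apply]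
  ring

end CharmatrixAdjugate

end Matrix

section Invariants

variable {R : Type*} [CommRing R] {n : ℕ}

theorem BB_zero (X : Matrix (Fin n) (Fin n) R) : BB X 0 = X.charpoly.coeff n • 1 := by
  simp [BB, QQ]

theorem BB_succ (X : Matrix (Fin n) (Fin n) R) (k : ℕ) :
    BB X (k + 1) = X * BB X k + X.charpoly.coeff (n - (k + 1)) • 1 := by
  have sign (i : ℕ) : (-1 : R) ^ i * QQ X i = X.charpoly.coeff (n - i) := by
    rw [QQ, ← mul_assoc, ← pow_add, Even.neg_one_pow ⟨i, rfl⟩, one_mul]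
  simp only [BB, sign, Finset.sum_range_succ _ (k + 1), Finset.mul_sum, mul_smul_comm,
    ← pow_succ', Nat.sub_self, pow_zero]
  congr 1
  refine Finset.sum_congr rfl fun i hi => ?_
  rw [Nat.sub_add_comm (Finset.mem_range_succ_iff.mp hi)]

theorem charmatrixAdjugate_coeff_eq_BB [Nontrivial R] (X : Matrix (Fin n) (Fin n) R) {k : ℕ}
    (hk : k < n) : (charmatrixAdjugate X).coeff (n - 1 - k) = BB X k := by
  induction k with
  | zero =>
    rw [Nat.sub_zero, charmatrixAdjugate_coeff, Nat.sub_add_cancel hk,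
      charmatrixAdjugate_coeff_eq_zero X (Fintype.card_fin n).le, mul_zero, zero_add, BB_zero]
  | succ k ih =>
    rw [BB_succ, ← ih (by omega), charmatrixAdjugate_coeff,
      show n - 1 - (k + 1) + 1 = n - 1 - k by omega, Nat.sub_sub, Nat.add_comm 1 k]

theorem fdef_eq_coeff [Nontrivial R] (X : Matrix (Fin n) (Fin n) R) (l v : Fin n → R) {k : ℕ}
    (hk : k < n) :
    fdef X l v k = (C ∘ l ⬝ᵥ adjugate (charmatrix X) *ᵥ C ∘ v).coeff (n - 1 - k) := by
  simp only [fdef, ← charmatrixAdjugate_coeff_eq_BB X hk, charmatrixAdjugate, dotProduct,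
    mulVec, Function.comp_apply, finsetSum_coeff, coeff_C_mul, coeff_mul_C, Finset.mul_sum,
    matPolyEquiv_coeff_apply]

theorem BB_units_conj (U : (Matrix (Fin n) (Fin n) R)ˣ) (X : Matrix (Fin n) (Fin n) R) (k : ℕ) :
    BB (U.val * X * U⁻¹.val) k = U.val * BB X k * U⁻¹.val := by
  have hχ : (U.val * X * U⁻¹.val).charpoly = X.charpoly := by
    rw [charpoly_mul_comm, ← mul_assoc, Units.inv_mul, one_mul]
  simp only [BB, QQ, hχ, Units.conj_pow, Finset.mul_sum, Finset.sum_mul, mul_smul_comm,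
    smul_mul_assoc]

theorem fdef_units_conj (U : (Matrix (Fin n) (Fin n) R)ˣ) (X : Matrix (Fin n) (Fin n) R)
    (l v : Fin n → R) (k : ℕ) :
    fdef (U.val * X * U⁻¹.val) (l ᵥ* U⁻¹.val) (U.val *ᵥ v) k = fdef X l v k := by
  rw [fdef, fdef, BB_units_conj, mulVec_mulVec, dotProduct_mulVec, vecMul_vecMul, mul_assoc,
    mul_assoc, Units.inv_mul, mul_one, ← mul_assoc, Units.inv_mul, one_mul, ← dotProduct_mulVec]

theorem fdef_add_vecMulVec_sub_vecMulVec [Nontrivial R] (X : Matrix (Fin n) (Fin n) R)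
    (w l v ν : Fin n → R) {k : ℕ} (hk : k < n) :
    fdef (X + vecMulVec w l - vecMulVec v ν) l v k = fdef X l v k := by
  rw [fdef_eq_coeff _ _ _ hk, fdef_eq_coeff _ _ _ hk, charmatrix_add_vecMulVec_sub_vecMulVec,
    dotProduct_adjugate_add_vecMulVec_mulVec]

end Invariants

/-- each `f_k` (`0 ≤ k ≤ n-1`) is invariant under the coadjoint action
of `GL_n ⋉ (V ⊕ V*)`. -/
theorem stmt_2 {K : Type*} [Field K] {n : ℕ} (hn : 1 ≤ n) (k : ℕ) (hk : k ≤ n - 1)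
    (X : Matrix (Fin n) (Fin n) K) (l v : Fin n → K) :
    (∀ g : GL (Fin n) K,
      fdef ((g : Matrix (Fin n) (Fin n) K) * X * ((g⁻¹ : GL (Fin n) K) : Matrix (Fin n) (Fin n) K))
        (vecMul l ((g⁻¹ : GL (Fin n) K) : Matrix (Fin n) (Fin n) K))
        (mulVec (g : Matrix (Fin n) (Fin n) K) v) k = fdef X l v k) ∧
    (∀ w nu : Fin n → K,
      fdef (X + vecMulVec w l - vecMulVec v nu) l v k = fdef X l v k) :=
  ⟨fun g => fdef_units_conj g X l v k,
    fun w nu => fdef_add_vecMulVec_sub_vecMulVec X w l v nu (by omega)⟩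
end

section
/- The polynomials f_0, f_1, …, f_{n−1}, viewed as elements of the polynomial ring over k in the n² + 2n variables given by the entries of X, λ and v, are algebraically independent over k. -/
open Matrix

-- auxiliary lemmas

lemma QQ_map {R S : Type*} [CommRing R] [CommRing S] {n : ℕ}
    (ψ : R →+* S) (X : Matrix (Fin n) (Fin n) R) (j : ℕ) :
    ψ (QQ X j) = QQ (X.map ψ) j := by
  simp [QQ, Matrix.charpoly_map, Polynomial.coeff_map]

lemma pow_map {R S : Type*} [CommRing R] [CommRing S] {n : ℕ}
    [DecidableEq (Fin n)]
    (ψ : R →+* S) (X : Matrix (Fin n) (Fin n) R) (m : ℕ) :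
    (X ^ m).map ψ = (X.map ψ) ^ m := by
  have := map_pow (RingHom.mapMatrix (m := Fin n) ψ) X m
  simpa [RingHom.mapMatrix_apply] using this

lemma BB_map {R S : Type*} [CommRing R] [CommRing S] {n : ℕ}
    (ψ : R →+* S) (X : Matrix (Fin n) (Fin n) R) (k : ℕ) :
    (BB X k).map ψ = BB (X.map ψ) k := by
  ext a b
  simp [BB, Matrix.sum_apply, Matrix.smul_apply, Matrix.map_apply, smul_eq_mul,
    map_sum, ← QQ_map ψ X, ← pow_map ψ X]

lemma fdef_map {R S : Type*} [CommRing R] [CommRing S] {n : ℕ}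
    (ψ : R →+* S) (X : Matrix (Fin n) (Fin n) R) (l v : Fin n → R) (k : ℕ) :
    ψ (fdef X l v k) = fdef (X.map ψ) (fun i => ψ (l i)) (fun i => ψ (v i)) k := by
  simp [fdef, dotProduct, mulVec, ← BB_map ψ X, Matrix.map_apply, Finset.mul_sum, map_sum]

section shift
variable {K : Type*} [Field K] {n : ℕ}

/-- shift matrix -/
noncomputable def NN (K : Type*) [Field K] (n : ℕ) : Matrix (Fin n) (Fin n) K :=
  Matrix.of fun a b => if (b : ℕ) = (a : ℕ) + 1 then 1 else 0

lemma NN_pow (m : ℕ) :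
    (NN K n) ^ m = Matrix.of fun (a b : Fin n) => if (b : ℕ) = (a : ℕ) + m then 1 else 0 := by
  induction m with
  | zero =>
    ext a b
    simp [Matrix.one_apply, Fin.ext_iff, eq_comm]
  | succ m ih =>
    ext a b
    rw [pow_succ, ih]
    simp only [Matrix.mul_apply, Matrix.of_apply, NN, ite_mul, one_mul, zero_mul]
    rcases lt_or_ge ((a : ℕ) + m) n with h | h
    · have hiff : ∀ x : Fin n, ((x : ℕ) = (a : ℕ) + m) ↔ x = ⟨(a : ℕ) + m, h⟩ := by
        intro x; simp [Fin.ext_iff]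
      simp_rw [hiff]
      rw [Finset.sum_ite_eq' Finset.univ]
      simp [add_assoc]
    · rw [Finset.sum_eq_zero]
      · have hb : ¬ ((b : ℕ) = (a : ℕ) + (m + 1)) := by have := b.isLt; omega
        simp [hb]
      · intro x _
        have hx : ¬ ((x : ℕ) = (a : ℕ) + m) := by have := x.isLt; omega
        simp [hx]

lemma NN_charpoly (hn : 1 ≤ n) : (NN K n).charpoly = Polynomial.X ^ n := by
  rw [Matrix.charpoly_of_upperTriangular]
  · simp [NN]
  · intro a b hba
    simp only [id, Fin.lt_def] at hba
    simp only [NN, Matrix.of_apply, ite_eq_right_iff]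
    intro h
    omega

lemma QQ_NN (hn : 1 ≤ n) (i : ℕ) : QQ (NN K n) i = if i = 0 then 1 else 0 := by
  rw [QQ, NN_charpoly hn]
  rcases eq_or_ne i 0 with rfl | hi
  · simp
  · have : n - i ≠ n := by omega
    simp [Polynomial.coeff_X_pow, this, hi]

lemma BB_NN (hn : 1 ≤ n) (k : ℕ) : BB (NN K n) k = (NN K n) ^ k := by
  rw [BB, Finset.sum_eq_single 0]
  · simp [QQ_NN hn]
  · intro i _ hi
    simp [QQ_NN hn, hi]
  · simp

end shift

lemma fdef_NN {K : Type*} [Field K] {n : ℕ} (hn : 1 ≤ n) (j : Fin n) :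
    haveI : NeZero n := ⟨by omega⟩
    fdef ((NN K n).map (algebraMap K (MvPolynomial (Fin n) K)))
      (fun i => if i = 0 then 1 else 0) (fun i => MvPolynomial.X i) (j : ℕ)
      = MvPolynomial.X j := by
  haveI : NeZero n := ⟨by omega⟩
  have h1 : BB ((NN K n).map (algebraMap K (MvPolynomial (Fin n) K))) (j : ℕ)
      = ((NN K n) ^ (j : ℕ)).map (algebraMap K (MvPolynomial (Fin n) K)) := by
    rw [← BB_map, BB_NN hn]
  rw [fdef, h1, NN_pow]
  simp only [dotProduct, mulVec, Matrix.map_apply, Matrix.of_apply]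
  rw [Finset.sum_eq_single (0 : Fin n)]
  · simp only [if_pos rfl, one_mul, Fin.val_zero, zero_add, apply_ite (algebraMap K _),
      _root_.map_one, _root_.map_zero, Fin.val_inj, ite_mul, zero_mul]
    rw [Finset.sum_ite_eq' Finset.univ]
    simp
  · intro a _ ha
    simp [ha]
  · simp

/-- the polynomials `f_0, …, f_{n-1}`, viewed as elements of the polynomial
ring in the `n² + 2n` variables given by the entries of `X`, `λ` and `v`, are
algebraically independent over `k`. -/
theorem stmt_3 {K : Type*} [Field K] {n : ℕ} (hn : 1 ≤ n) :
    AlgebraicIndependent K (fun j : Fin n =>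
      fdef (R := MvPolynomial ((Fin n × Fin n) ⊕ (Fin n) ⊕ (Fin n)) K)
        (Matrix.of fun a b => MvPolynomial.X (Sum.inl (a, b)))
        (fun i => MvPolynomial.X (Sum.inr (Sum.inl i)))
        (fun i => MvPolynomial.X (Sum.inr (Sum.inr i)))
        (j : ℕ)) := by
  haveI : NeZero n := ⟨by omega⟩
  classical
  set g : ((Fin n × Fin n) ⊕ (Fin n) ⊕ (Fin n)) → MvPolynomial (Fin n) K :=
    Sum.elim (fun p => algebraMap K (MvPolynomial (Fin n) K) (NN K n p.1 p.2))
      (Sum.elim (fun i => if i = 0 then 1 else 0) (fun i => MvPolynomial.X i)) with hg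
  apply AlgebraicIndependent.of_comp (MvPolynomial.aeval g)
  have key : (⇑(MvPolynomial.aeval (R := K) g)) ∘ (fun j : Fin n =>
      fdef (R := MvPolynomial ((Fin n × Fin n) ⊕ (Fin n) ⊕ (Fin n)) K)
        (Matrix.of fun a b => MvPolynomial.X (Sum.inl (a, b)))
        (fun i => MvPolynomial.X (Sum.inr (Sum.inl i)))
        (fun i => MvPolynomial.X (Sum.inr (Sum.inr i)))
        (j : ℕ)) = fun j : Fin n => MvPolynomial.X j := by
    funext j
    simp only [Function.comp_apply]
    rw [show (⇑(MvPolynomial.aeval (R := K) g)) = ⇑((MvPolynomial.aeval (R := K) g).toRingHom) from rfl,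
      fdef_map]
    have hX : (Matrix.of fun a b => MvPolynomial.X (R := K) (Sum.inl (a, b))).map
        (MvPolynomial.aeval (R := K) g).toRingHom
        = (NN K n).map (algebraMap K (MvPolynomial (Fin n) K)) := by
      ext a b
      simp [hg, Matrix.map_apply]
    have hl : (fun i => (MvPolynomial.aeval (R := K) g).toRingHom
        (MvPolynomial.X (Sum.inr (Sum.inl i))))
        = fun i : Fin n => if i = 0 then (1 : MvPolynomial (Fin n) K) else 0 := by
      funext i; simp [hg]
    have hv : (fun i => (MvPolynomial.aeval (R := K) g).toRingHom
        (MvPolynomial.X (Sum.inr (Sum.inr i))))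
        = fun i : Fin n => MvPolynomial.X (R := K) i := by
      funext i; simp [hg]
    rw [hX, hl, hv, fdef_NN hn]
  rw [key]
  exact MvPolynomial.algebraicIndependent_X _ _
end
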